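/- arXiv:1610.06784 — 4 statements merged into one kernel-verified Lean document; each statement's English description precedes it below -/
import Mathlib

section
/- Let L(X) = AX + XB be an invertible Sylvester operator on ℂ^{n×m}, let W_k: ℂ^{n×m} → ℂ be linear functionals and E_k ∈ ℂ^{n×m} for k = 1,...,N, and define Π(X) := Σ_{k=1}^N W_k(X) E_k. Let F_k := L^{-1}(E_k), G := L^{-1}(C), let W ∈ ℂ^{N×N} have entries W_{jk} = δ_{jk} + W_j(F_k), and g ∈ ℂ^N have entries g_j = W_j(G). If W is invertible with W a = g, then X := L^{-1}(C - Σ_{k=1}^N a_k E_k) satisfies L(X) + Π(X) = C. -/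
open Matrix

/-! The linear system `W a = g` says exactly that `W_j(X) = a_j` for `X = L⁻¹(C - Σ aₖ Eₖ)`,
so `Π(X) = Σ aₖ Eₖ` cancels the correction made to `C`, and `L(X) + Π(X) = C`. -/

theorem LinearMap.apply_sub_sum_smul_eq_of_mulVec_eq {R V ι : Type*} [CommRing R]
    [AddCommGroup V] [Module R V] [Fintype ι] [DecidableEq ι]
    {φ : ι → V →ₗ[R] R} {E : ι → V} {C : V} {M : Matrix ι ι R}
    (hM : ∀ j k, M j k = (if j = k then (1 : R) else 0) + φ j (E k))
    {a : ι → R} (ha : M *ᵥ a = fun j => φ j C) (k : ι) :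
    φ k (C - ∑ j, a j • E j) = a k := by
  have hk : a k + ∑ j, φ k (E j) * a j = φ k C := by
    simpa [mulVec, dotProduct, hM, add_mul, Finset.sum_add_distrib] using congrFun ha k
  simp only [map_sub, map_sum, map_smul, smul_eq_mul]
  rw [← hk]
  simp only [mul_comm (a _)]
  ring

theorem sylvester_smw_general (n m N : ℕ)
    (A : Matrix (Fin n) (Fin n) ℂ) (B : Matrix (Fin m) (Fin m) ℂ)
    (Linv : Matrix (Fin n) (Fin m) ℂ →ₗ[ℂ] Matrix (Fin n) (Fin m) ℂ)
    (hinv : ∀ Y : Matrix (Fin n) (Fin m) ℂ, A * Linv Y + Linv Y * B = Y)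
    (Wf : Fin N → (Matrix (Fin n) (Fin m) ℂ →ₗ[ℂ] ℂ))
    (E : Fin N → Matrix (Fin n) (Fin m) ℂ)
    (C : Matrix (Fin n) (Fin m) ℂ)
    (Wmat : Matrix (Fin N) (Fin N) ℂ)
    (hWmat : ∀ j k, Wmat j k = (if j = k then (1 : ℂ) else 0) + Wf j (Linv (E k)))
    (a : Fin N → ℂ)
    (ha : Wmat *ᵥ a = fun j => Wf j (Linv C)) :
    A * Linv (C - ∑ k, a k • E k) + Linv (C - ∑ k, a k • E k) * B +
      ∑ k, Wf k (Linv (C - ∑ j, a j • E j)) • E k = C := by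
  have hcoef : ∀ k, Wf k (Linv (C - ∑ j, a j • E j)) = a k :=
    LinearMap.apply_sub_sum_smul_eq_of_mulVec_eq (φ := fun j => (Wf j).comp Linv) hWmat ha
  rw [hinv]
  simp only [hcoef, sub_add_cancel]

/-- Sylvester-type SMW structure (Theorem 4.1): if W a = g then
X = L⁻¹(C - Σ aₖ Eₖ) solves L(X) + Π(X) = C. Here `Linv` is the inverse of the
invertible Sylvester operator L(X) = AX + XB. -/
theorem sylvester_smw (n m N : ℕ)
    (A : Matrix (Fin n) (Fin n) ℂ) (B : Matrix (Fin m) (Fin m) ℂ)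
    (Linv : Matrix (Fin n) (Fin m) ℂ →ₗ[ℂ] Matrix (Fin n) (Fin m) ℂ)
    (hinv : ∀ Y : Matrix (Fin n) (Fin m) ℂ, A * Linv Y + Linv Y * B = Y)
    (Wf : Fin N → (Matrix (Fin n) (Fin m) ℂ →ₗ[ℂ] ℂ))
    (E : Fin N → Matrix (Fin n) (Fin m) ℂ)
    (C : Matrix (Fin n) (Fin m) ℂ)
    (Wmat : Matrix (Fin N) (Fin N) ℂ)
    (hWmat : ∀ j k, Wmat j k = (if j = k then (1 : ℂ) else 0) + Wf j (Linv (E k)))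
    (hWu : IsUnit Wmat)
    (a : Fin N → ℂ)
    (ha : Wmat *ᵥ a = fun j => Wf j (Linv C)) :
    A * Linv (C - ∑ k, a k • E k) + Linv (C - ∑ k, a k • E k) * B +
      ∑ k, Wf k (Linv (C - ∑ j, a j • E j)) • E k = C :=
  sylvester_smw_general n m N A B Linv hinv Wf E C Wmat hWmat a ha
end

section
/- In the setting of the Sylvester-type SMW theorem, if the operator L + Π on ℂ^{n×m} is invertible (has a unique solution for every right-hand side), then the N×N matrix W with entries W_{jk} = δ_{jk} + W_j(L^{-1}(E_k)) is invertible. -/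
open Matrix

section ShermanMorrisonWoodbury

variable {R M ι : Type*} [CommRing R] [AddCommGroup M] [Module R M] [Fintype ι] [DecidableEq ι]

/-- The capacitance matrix `δ_{jk} + W_j (G (E_k))` of the rank-`|ι|` perturbation
`X ↦ ∑ k, W k X • E k`, where `G` plays the role of `L⁻¹`. -/
def smwMatrix (G : M →ₗ[R] M) (W : ι → M →ₗ[R] R) (E : ι → M) : Matrix ι ι R :=
  1 + Matrix.of fun j k => W j (G (E k))

theorem smwMatrix_mulVec (G : M →ₗ[R] M) (W : ι → M →ₗ[R] R) (E : ι → M) (v : ι → R) :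
    smwMatrix G W E *ᵥ v = v + fun j => W j (G (∑ k, v k • E k)) := by
  rw [smwMatrix, add_mulVec, one_mulVec]
  ext j
  simp only [Pi.add_apply, mulVec, dotProduct, of_apply, map_sum, map_smul, smul_eq_mul,
    mul_comm]

/-- A kernel vector `v` of the capacitance matrix yields the kernel vector `G (∑ k, v k • E k)`
of `L + Π`, since `L` cancels `G` and `Π` contributes `-∑ k, v k • E k`. -/
theorem eq_zero_of_smwMatrix_mulVec_eq_zero {L G : M →ₗ[R] M} (hLG : ∀ Y, L (G Y) = Y)
    {W : ι → M →ₗ[R] R} {E : ι → M} (hinj : ∀ X, L X + ∑ k, W k X • E k = 0 → X = 0)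
    {v : ι → R} (hv : smwMatrix G W E *ᵥ v = 0) : v = 0 := by
  set X := G (∑ k, v k • E k)
  rw [smwMatrix_mulVec] at hv
  have hWX : ∀ j, W j X = -v j := fun j => eq_neg_of_add_eq_zero_right (congrFun hv j)
  have hX : X = 0 := hinj X <| by
    simp only [X, hLG, hWX, neg_smul, Finset.sum_neg_distrib, add_neg_cancel]
  funext j
  simpa [hX] using (hWX j).symm

theorem isUnit_smwMatrix {K : Type*} [Field K] [Module K M] {L G : M →ₗ[K] M}
    (hLG : ∀ Y, L (G Y) = Y) {W : ι → M →ₗ[K] K} {E : ι → M}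
    (hinj : ∀ X, L X + ∑ k, W k X • E k = 0 → X = 0) : IsUnit (smwMatrix G W E) :=
  mulVec_injective_iff_isUnit.mp <| (injective_iff_map_eq_zero (smwMatrix G W E).mulVecLin).mpr
    fun _ => eq_zero_of_smwMatrix_mulVec_eq_zero hLG hinj

end ShermanMorrisonWoodbury

def sylvesterMap {R m n : Type*} [CommSemiring R] [Fintype m] [Fintype n]
    (A : Matrix n n R) (B : Matrix m m R) : Matrix n m R →ₗ[R] Matrix n m R where
  toFun X := A * X + X * B
  map_add' X Y := by simp only [Matrix.mul_add, Matrix.add_mul]; abel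
  map_smul' c X := by simp only [Matrix.mul_smul, Matrix.smul_mul, RingHom.id_apply, smul_add]

theorem sylvester_smw_W_invertible_general (n m N : ℕ)
    (A : Matrix (Fin n) (Fin n) ℂ) (B : Matrix (Fin m) (Fin m) ℂ)
    (Linv : Matrix (Fin n) (Fin m) ℂ →ₗ[ℂ] Matrix (Fin n) (Fin m) ℂ)
    (hinv₁ : ∀ Y : Matrix (Fin n) (Fin m) ℂ, A * Linv Y + Linv Y * B = Y)
    (Wf : Fin N → (Matrix (Fin n) (Fin m) ℂ →ₗ[ℂ] ℂ))
    (E : Fin N → Matrix (Fin n) (Fin m) ℂ)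
    (Wmat : Matrix (Fin N) (Fin N) ℂ)
    (hWmat : ∀ j k, Wmat j k = (if j = k then (1 : ℂ) else 0) + Wf j (Linv (E k)))
    (hLPi : ∀ C : Matrix (Fin n) (Fin m) ℂ,
      ∃! X : Matrix (Fin n) (Fin m) ℂ, A * X + X * B + ∑ k, Wf k X • E k = C) :
    IsUnit Wmat := by
  have hW : Wmat = smwMatrix Linv Wf E := by
    ext j k
    simp [smwMatrix, hWmat, one_apply]
  have hinj : ∀ X, sylvesterMap A B X + ∑ k, Wf k X • E k = 0 → X = 0 := fun X hX =>
    (hLPi 0).unique hX (by simp)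
  exact hW ▸ isUnit_smwMatrix (L := sylvesterMap A B) hinv₁ hinj

/-- If the operator L + Π is invertible, then the SMW matrix W is invertible. -/
theorem sylvester_smw_W_invertible (n m N : ℕ)
    (A : Matrix (Fin n) (Fin n) ℂ) (B : Matrix (Fin m) (Fin m) ℂ)
    (Linv : Matrix (Fin n) (Fin m) ℂ →ₗ[ℂ] Matrix (Fin n) (Fin m) ℂ)
    (hinv₁ : ∀ Y : Matrix (Fin n) (Fin m) ℂ, A * Linv Y + Linv Y * B = Y)
    (hinv₂ : ∀ X : Matrix (Fin n) (Fin m) ℂ, Linv (A * X + X * B) = X)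
    (Wf : Fin N → (Matrix (Fin n) (Fin m) ℂ →ₗ[ℂ] ℂ))
    (E : Fin N → Matrix (Fin n) (Fin m) ℂ)
    (Wmat : Matrix (Fin N) (Fin N) ℂ)
    (hWmat : ∀ j k, Wmat j k = (if j = k then (1 : ℂ) else 0) + Wf j (Linv (E k)))
    (hLPi : ∀ C : Matrix (Fin n) (Fin m) ℂ,
      ∃! X : Matrix (Fin n) (Fin m) ℂ, A * X + X * B + ∑ k, Wf k X • E k = C) :
    IsUnit Wmat :=
  sylvester_smw_W_invertible_general n m N A B Linv hinv₁ Wf E Wmat hWmat hLPi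
end

section
/- Let S = Q - C₁ P^{-1} C₂^T with Q vec(X) = vec(AX + XB + K ∘ X) for A = D_zz + 2σD_z + σ²I, B = D_xx, and C₁P^{-1}C₂^T as in the waveguide structure. Then for any k̄ ∈ ℂ, S vec(X) = vec(C) holds if and only if (A + k̄I)X + XB + (K - k̄𝟙𝟙^T) ∘ X - P₋^{-1} X E - P₊^{-1} X J E J = C, where E = (1/h²)(d₁e₁ + d₂e₂)e₁^T and J is the flipped identity. -/
/-!
With e₁ the first unit vector and w = d₁e₁ + d₂e₂, the coupling matrices are
C₁ = h⁻² (e₁ ⊗ I, Je₁ ⊗ I) and C₂ᵀ = (wᵀ ⊗ I; (Jw)ᵀ ⊗ I), so the block product collapses to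
C₁ P⁻¹ C₂ᵀ = (e₁wᵀ)h⁻² ⊗ P₋⁻¹ + (Je₁(Jw)ᵀ)h⁻² ⊗ P₊⁻¹ = Eᵀ ⊗ P₋⁻¹ + (JEJ)ᵀ ⊗ P₊⁻¹.
The identity (Bᵀ ⊗ A) vec X = vec (A X B) turns S vec X into the vectorization of
A X + X B + K ∘ X - P₋⁻¹ X E - P₊⁻¹ X JEJ, and vec is injective. The k̄-terms cancel since
k̄ I X = (k̄ 𝟙𝟙ᵀ) ∘ X.
-/

open Matrix

/-- Vectorization: stack the columns of a matrix on top of each other. -/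
def vecOf {nz nx : ℕ} (X : Matrix (Fin nz) (Fin nx) ℂ) : Fin nx × Fin nz → ℂ :=
  fun p => X p.2 p.1

open scoped Kronecker

theorem Fin.val_add_val_add_one_eq_iff {n : ℕ} {i j : Fin n} :
    (i : ℕ) + j + 1 = n ↔ i = j.rev := by
  rw [Fin.ext_iff, Fin.val_rev]
  omega

theorem Pi.single_comp_rev {R : Type*} [Zero R] {n : ℕ} (i : Fin n) (a : R) :
    Pi.single i a ∘ Fin.rev = Pi.single i.rev a := by
  ext j
  simp [Pi.single_apply, Fin.rev_eq_iff]

namespace Matrix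

theorem fromCols_mul_fromBlocks_diag_mul_fromRows {R l m n₁ n₂ : Type*} [Semiring R]
    [Fintype n₁] [Fintype n₂] (A₁ : Matrix l n₁ R) (A₂ : Matrix l n₂ R)
    (P : Matrix n₁ n₁ R) (Q : Matrix n₂ n₂ R) (B₁ : Matrix n₁ m R) (B₂ : Matrix n₂ m R) :
    fromCols A₁ A₂ * fromBlocks P 0 0 Q * fromRows B₁ B₂ = A₁ * P * B₁ + A₂ * Q * B₂ := by
  simp [fromCols_mul_fromBlocks, fromCols_mul_fromRows]

section ColRowKron

variable {R m n k : Type*} [CommSemiring R]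

def colKron (u : m → R) (A : Matrix n k R) : Matrix (m × n) k R :=
  of fun p j => u p.1 * A p.2 j

def rowKron (w : m → R) (B : Matrix k n R) : Matrix k (m × n) R :=
  of fun j p => w p.1 * B j p.2

theorem colKron_mul_mul_rowKron [Fintype k] (u w : m → R) (A : Matrix n k R) (P : Matrix k k R)
    (B : Matrix k n R) : colKron u A * P * rowKron w B = vecMulVec u w ⊗ₖ (A * P * B) := by
  ext ⟨i, i'⟩ ⟨j, j'⟩
  simp only [mul_apply, colKron, rowKron, of_apply, kroneckerMap_apply, vecMulVec_apply,
    Finset.mul_sum, Finset.sum_mul]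
  exact Finset.sum_congr rfl fun _ _ => Finset.sum_congr rfl fun _ _ => by ring

theorem fromCols_colKron_mul_fromBlocks_mul_fromRows_rowKron_mulVec_vec
    [Fintype m] [Fintype n] [Fintype k] (c : R) (u₁ u₂ w₁ w₂ : m → R) (A₁ A₂ : Matrix n k R)
    (P Q : Matrix k k R) (B₁ B₂ : Matrix k n R) (X : Matrix n m R) :
    (c • fromCols (colKron u₁ A₁) (colKron u₂ A₂) * fromBlocks P 0 0 Q *
        fromRows (rowKron w₁ B₁) (rowKron w₂ B₂)) *ᵥ X.vec =
      (A₁ * P * B₁ * X * (c • vecMulVec w₁ u₁) +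
        A₂ * Q * B₂ * X * (c • vecMulVec w₂ u₂)).vec := by
  rw [Matrix.smul_mul, Matrix.smul_mul, fromCols_mul_fromBlocks_diag_mul_fromRows,
    colKron_mul_mul_rowKron, colKron_mul_mul_rowKron, smul_mulVec, add_mulVec,
    kronecker_mulVec_vec, kronecker_mulVec_vec, transpose_vecMulVec, transpose_vecMulVec]
  simp [Matrix.mul_smul, smul_add]

end ColRowKron

def antiIdentity (R : Type*) [Zero R] [One R] (n : ℕ) : Matrix (Fin n) (Fin n) R :=
  of fun k l => if (k : ℕ) + l + 1 = n then 1 else 0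

section AntiIdentity

variable {R o : Type*} {n : ℕ}

theorem antiIdentity_mul [NonAssocSemiring R] (M : Matrix (Fin n) o R) :
    antiIdentity R n * M = M.submatrix Fin.rev id := by
  ext i j
  simp [antiIdentity, mul_apply, Fin.val_add_val_add_one_eq_iff, ← Fin.rev_eq_iff]

theorem mul_antiIdentity [NonAssocSemiring R] (M : Matrix o (Fin n) R) :
    M * antiIdentity R n = M.submatrix id Fin.rev := by
  ext i j
  simp [antiIdentity, mul_apply, Fin.val_add_val_add_one_eq_iff]

theorem antiIdentity_mul_vecMulVec_mul_antiIdentity [CommSemiring R] (u w : Fin n → R) :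
    antiIdentity R n * vecMulVec u w * antiIdentity R n =
      vecMulVec (u ∘ Fin.rev) (w ∘ Fin.rev) := by
  rw [antiIdentity_mul, mul_antiIdentity]
  rfl

end AntiIdentity

end Matrix

theorem vecOf_eq_vec {nz nx : ℕ} (X : Matrix (Fin nz) (Fin nx) ℂ) : vecOf X = X.vec := rfl

/-- The waveguide matrix equation (Proposition 3.1): S vec(X) = vec(C) iff
(A + kbar I)X + XB + (K - kbar𝟙𝟙ᵀ)∘X - P₋⁻¹ X E - P₊⁻¹ X J E J = C. -/
theorem waveguide_matrix_equation (nz nx : ℕ) (hx : 2 ≤ nx)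
    (σ kbar h d₁ d₂ : ℂ)
    (Dzz Dz : Matrix (Fin nz) (Fin nz) ℂ) (Dxx : Matrix (Fin nx) (Fin nx) ℂ)
    (K : Matrix (Fin nz) (Fin nx) ℂ)
    (Pm Pp : Matrix (Fin nz) (Fin nz) ℂ)
    -- Q is the matrix whose action is vec(X) ↦ vec((D_zz + 2σD_z + σ²I)X + XD_xx + K∘X)
    (Qmat : Matrix (Fin nx × Fin nz) (Fin nx × Fin nz) ℂ)
    (hQ : ∀ X : Matrix (Fin nz) (Fin nx) ℂ,
      Qmat *ᵥ vecOf X =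
        vecOf ((Dzz + (2 * σ) • Dz + σ ^ 2 • (1 : Matrix (Fin nz) (Fin nz) ℂ)) * X +
          X * Dxx + Matrix.hadamard K X))
    -- C₁ = (1/h²)(e₁ ⊗ Iₙ, e_{nx} ⊗ Iₙ)
    (C₁ : Matrix (Fin nx × Fin nz) (Fin nz ⊕ Fin nz) ℂ)
    (hC₁ : C₁ = Matrix.of fun (p : Fin nx × Fin nz) (s : Fin nz ⊕ Fin nz) =>
        (1 / h ^ 2) * Sum.elim
          (fun j => (if p.1 = (⟨0, by omega⟩ : Fin nx) then (1 : ℂ) else 0) *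
            (if p.2 = j then 1 else 0))
          (fun j => (if p.1 = (⟨nx - 1, by omega⟩ : Fin nx) then (1 : ℂ) else 0) *
            (if p.2 = j then 1 else 0)) s)
    -- C₂ᵀ = [d₁ e₁ᵀ ⊗ Iₙ + d₂ e₂ᵀ ⊗ Iₙ ; d₁ e_{nx}ᵀ ⊗ Iₙ + d₂ e_{nx-1}ᵀ ⊗ Iₙ]
    (C₂t : Matrix (Fin nz ⊕ Fin nz) (Fin nx × Fin nz) ℂ)
    (hC₂t : C₂t = Matrix.of fun (s : Fin nz ⊕ Fin nz) (p : Fin nx × Fin nz) =>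
        Sum.elim
          (fun j => d₁ * (if p.1 = (⟨0, by omega⟩ : Fin nx) then (1 : ℂ) else 0) *
              (if j = p.2 then 1 else 0) +
            d₂ * (if p.1 = (⟨1, by omega⟩ : Fin nx) then (1 : ℂ) else 0) *
              (if j = p.2 then 1 else 0))
          (fun j => d₁ * (if p.1 = (⟨nx - 1, by omega⟩ : Fin nx) then (1 : ℂ) else 0) *
              (if j = p.2 then 1 else 0) +
            d₂ * (if p.1 = (⟨nx - 2, by omega⟩ : Fin nx) then (1 : ℂ) else 0) *
              (if j = p.2 then 1 else 0)) s)
    -- E = (1/h²)(d₁e₁ + d₂e₂)e₁ᵀ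
    (E : Matrix (Fin nx) (Fin nx) ℂ)
    (hE : E = Matrix.of fun (r c : Fin nx) =>
        (1 / h ^ 2) * ((d₁ * (if r = (⟨0, by omega⟩ : Fin nx) then (1 : ℂ) else 0) +
          d₂ * (if r = (⟨1, by omega⟩ : Fin nx) then (1 : ℂ) else 0)) *
          (if c = (⟨0, by omega⟩ : Fin nx) then (1 : ℂ) else 0)))
    -- J is the flipped identity
    (J : Matrix (Fin nx) (Fin nx) ℂ)
    (hJ : J = Matrix.of fun (k l : Fin nx) =>
        if (k : ℕ) + (l : ℕ) + 1 = nx then (1 : ℂ) else 0)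
    (X C : Matrix (Fin nz) (Fin nx) ℂ) :
    (Qmat - C₁ * Matrix.fromBlocks Pm⁻¹ 0 0 Pp⁻¹ * C₂t) *ᵥ vecOf X = vecOf C ↔
      (Dzz + (2 * σ) • Dz + (σ ^ 2 + kbar) • (1 : Matrix (Fin nz) (Fin nz) ℂ)) * X +
        X * Dxx +
        Matrix.hadamard (K - kbar • Matrix.of fun _ _ => (1 : ℂ)) X -
        Pm⁻¹ * X * E - Pp⁻¹ * X * (J * E * J) = C := by
  let e : Fin nx → Fin nx → ℂ := fun i => Pi.single i 1
  let w : Fin nx → ℂ := d₁ • e ⟨0, by omega⟩ + d₂ • e ⟨1, by omega⟩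
  have hrev₀ : Fin.rev (⟨0, by omega⟩ : Fin nx) = ⟨nx - 1, by omega⟩ :=
    Fin.ext (Fin.val_rev _)
  have hrev₁ : Fin.rev (⟨1, by omega⟩ : Fin nx) = ⟨nx - 2, by omega⟩ :=
    Fin.ext (Fin.val_rev _)
  have hwrev : w ∘ Fin.rev = d₁ • e ⟨nx - 1, by omega⟩ + d₂ • e ⟨nx - 2, by omega⟩ := by
    funext j
    simp [w, e, Pi.single_apply, Fin.rev_eq_iff, hrev₀, hrev₁]
  have hC₁' : C₁ = (1 / h ^ 2) • fromCols (colKron (e ⟨0, by omega⟩) 1)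
      (colKron (e ⟨0, by omega⟩ ∘ Fin.rev) 1) := by
    rw [hC₁, Pi.single_comp_rev, hrev₀]
    ext p (j | j) <;> simp [e, colKron, Pi.single_apply, one_apply]
  have hC₂t' : C₂t = fromRows (rowKron w 1) (rowKron (w ∘ Fin.rev) 1) := by
    rw [hC₂t, hwrev]
    ext (j | j) p <;> simp [w, e, rowKron, Pi.single_apply, one_apply, ite_add_ite]
  have hE' : E = (1 / h ^ 2) • vecMulVec w (e ⟨0, by omega⟩) := by
    rw [hE]
    ext r c
    simp [w, e, vecMulVec_apply, Pi.single_apply]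
  have hJEJ :
      J * E * J = (1 / h ^ 2) • vecMulVec (w ∘ Fin.rev) (e ⟨0, by omega⟩ ∘ Fin.rev) := by
    rw [show J = antiIdentity ℂ nx from hJ, hE', Matrix.mul_smul, Matrix.smul_mul,
      antiIdentity_mul_vecMulVec_mul_antiIdentity]
  have hcoupling : (C₁ * fromBlocks Pm⁻¹ 0 0 Pp⁻¹ * C₂t) *ᵥ X.vec =
      (Pm⁻¹ * X * E + Pp⁻¹ * X * (J * E * J)).vec := by
    rw [hC₁', hC₂t', fromCols_colKron_mul_fromBlocks_mul_fromRows_rowKron_mulVec_vec, hJEJ, hE']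
    simp only [Matrix.one_mul, Matrix.mul_one]
  have hshift : (Dzz + (2 * σ) • Dz + (σ ^ 2 + kbar) • (1 : Matrix (Fin nz) (Fin nz) ℂ)) * X +
        X * Dxx + (K - kbar • of fun _ _ => (1 : ℂ)) ⊙ X =
      (Dzz + (2 * σ) • Dz + σ ^ 2 • (1 : Matrix (Fin nz) (Fin nz) ℂ)) * X + X * Dxx + K ⊙ X := by
    ext i j
    simp only [add_smul, Matrix.add_mul, Matrix.smul_mul, Matrix.one_mul, smul_of,
      Matrix.add_apply, Matrix.smul_apply, smul_eq_mul, hadamard_apply, Matrix.sub_apply,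
      of_apply, Pi.smul_apply, mul_one, sub_mul]
    ring
  simp only [vecOf_eq_vec] at hQ ⊢
  rw [sub_mulVec, hQ, hcoupling, ← vec_sub, vec_inj, hshift, sub_sub]
end

section
/- Let L(X) = AX + XB be an invertible Sylvester operator on ℂ^{n×m} and Π(X) = Σ_{k=1}^N W_k(X)E_k. If X solves L(X) + Π(X) = C, then the vector a ∈ ℂ^N with a_k = W_k(X) satisfies W a = g, where W_{jk} = δ_{jk} + W_j(L^{-1}(E_k)) and g_j = W_j(L^{-1}(C)); moreover X = L^{-1}(C - Σ_k a_k E_k). -/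
open Matrix

/-!
Write `L X = A X + X B` and `aₖ = Wₖ(X)`. Applying the left inverse `L⁻¹` to
`L X + ∑ aₖ Eₖ = C` gives `L⁻¹ C = X + ∑ aₖ L⁻¹ Eₖ`, which already contains the second claim;
applying `Wⱼ` to it gives `gⱼ = aⱼ + ∑ₖ Wⱼ(L⁻¹ Eₖ) aₖ = (W a)ⱼ`.
-/

section LowRankCorrection

variable {R M ι : Type*} [CommRing R] [AddCommGroup M] [Module R M] [Fintype ι]

def capacitanceMatrix [DecidableEq ι] (W : ι → M →ₗ[R] R) (F : ι → M) : Matrix ι ι R :=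
  1 + Matrix.of fun j k => W j (F k)

theorem capacitanceMatrix_mulVec_eval [DecidableEq ι] (W : ι → M →ₗ[R] R) (F : ι → M) (X : M) :
    capacitanceMatrix W F *ᵥ (fun k => W k X) = fun j => W j (X + ∑ k, W k X • F k) := by
  funext j
  rw [capacitanceMatrix, add_mulVec, one_mulVec]
  simp only [Pi.add_apply, map_add, map_sum, map_smul, smul_eq_mul, mulVec, dotProduct,
    of_apply, mul_comm]

variable {L : M → M} {Linv : M →ₗ[R] M}

theorem eq_leftInverse_sub_of_add_eq (hL : ∀ X, Linv (L X) = X) {X P C : M}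
    (h : L X + P = C) : X = Linv (C - P) := by
  rw [← h, add_sub_cancel_right, hL]

theorem leftInverse_eq_add_sum_of_add_sum_eq (hL : ∀ X, Linv (L X) = X) {X C : M}
    {a : ι → R} {E : ι → M} (h : L X + ∑ k, a k • E k = C) :
    Linv C = X + ∑ k, a k • Linv (E k) := by
  simp only [← h, map_add, hL, map_sum, map_smul]

end LowRankCorrection

theorem sylvester_smw_converse_general (n m N : ℕ)
    (A : Matrix (Fin n) (Fin n) ℂ) (B : Matrix (Fin m) (Fin m) ℂ)
    (Linv : Matrix (Fin n) (Fin m) ℂ →ₗ[ℂ] Matrix (Fin n) (Fin m) ℂ)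
    (hinv₂ : ∀ X : Matrix (Fin n) (Fin m) ℂ, Linv (A * X + X * B) = X)
    (Wf : Fin N → (Matrix (Fin n) (Fin m) ℂ →ₗ[ℂ] ℂ))
    (E : Fin N → Matrix (Fin n) (Fin m) ℂ)
    (C : Matrix (Fin n) (Fin m) ℂ)
    (Wmat : Matrix (Fin N) (Fin N) ℂ)
    (hWmat : ∀ j k, Wmat j k = (if j = k then (1 : ℂ) else 0) + Wf j (Linv (E k)))
    (X : Matrix (Fin n) (Fin m) ℂ)
    (hX : A * X + X * B + ∑ k, Wf k X • E k = C) :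
    (Wmat *ᵥ fun k => Wf k X) = (fun j => Wf j (Linv C)) ∧
    X = Linv (C - ∑ k, Wf k X • E k) := by
  have hL : ∀ Y, Linv ((fun Y => A * Y + Y * B) Y) = Y := hinv₂
  have hW : Wmat = capacitanceMatrix Wf (fun k => Linv (E k)) := by
    ext j k
    rw [hWmat, capacitanceMatrix, Matrix.add_apply, one_apply, of_apply]
  refine ⟨?_, eq_leftInverse_sub_of_add_eq hL hX⟩
  rw [hW, capacitanceMatrix_mulVec_eval, leftInverse_eq_add_sum_of_add_sum_eq hL hX]

/-- Converse direction of the Sylvester-type SMW theorem: if X solves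
L(X) + Π(X) = C, then a with aₖ = Wₖ(X) satisfies W a = g and
X = L⁻¹(C - Σ aₖ Eₖ). -/
theorem sylvester_smw_converse (n m N : ℕ)
    (A : Matrix (Fin n) (Fin n) ℂ) (B : Matrix (Fin m) (Fin m) ℂ)
    (Linv : Matrix (Fin n) (Fin m) ℂ →ₗ[ℂ] Matrix (Fin n) (Fin m) ℂ)
    (hinv₁ : ∀ Y : Matrix (Fin n) (Fin m) ℂ, A * Linv Y + Linv Y * B = Y)
    (hinv₂ : ∀ X : Matrix (Fin n) (Fin m) ℂ, Linv (A * X + X * B) = X)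
    (Wf : Fin N → (Matrix (Fin n) (Fin m) ℂ →ₗ[ℂ] ℂ))
    (E : Fin N → Matrix (Fin n) (Fin m) ℂ)
    (C : Matrix (Fin n) (Fin m) ℂ)
    (Wmat : Matrix (Fin N) (Fin N) ℂ)
    (hWmat : ∀ j k, Wmat j k = (if j = k then (1 : ℂ) else 0) + Wf j (Linv (E k)))
    (X : Matrix (Fin n) (Fin m) ℂ)
    (hX : A * X + X * B + ∑ k, Wf k X • E k = C) :
    (Wmat *ᵥ fun k => Wf k X) = (fun j => Wf j (Linv C)) ∧
    X = Linv (C - ∑ k, Wf k X • E k) :=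
  sylvester_smw_converse_general n m N A B Linv hinv₂ Wf E C Wmat hWmat X hX
end
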